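/- Let A, B be positive semi-definite operators on a finite-dimensional real inner product space and let M be an invertible linear operator. Then M·!(A,B)·M* = !(MAM*, MBM*), where !(A,B) := 2A(A+B)⁺B is the parallel-sum (quasi-projection) operator. -/

import Mathlib

/-!
Only the first Penrose condition matters. If `X` is any inner inverse of `S = A + B`, then
positivity gives `ker S ≤ ker A` and `range B ≤ range S`, so `A X B = A X S Y B = A Y B` for
any two inner inverses `X`, `Y`: the product does not depend on the choice of inverse. Since
`M` is invertible, `M* G' M` is an inner inverse of `S` whenever `G'` is one of `M S M*`.
-/

/-- `G` is the Moore-Penrose pseudo-inverse of `L` (Penrose conditions;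
adjoint-symmetry of `L ∘ G` and `G ∘ L` expressed via `IsSymmetric`). -/
def IsMoorePenrose {V : Type*} [NormedAddCommGroup V] [InnerProductSpace ℝ V]
    (L G : V →ₗ[ℝ] V) : Prop :=
  L ∘ₗ (G ∘ₗ L) = L ∧ G ∘ₗ (L ∘ₗ G) = G ∧
  (L ∘ₗ G).IsSymmetric ∧ (G ∘ₗ L).IsSymmetric

namespace LinearMap

section InnerProductSpace

variable {𝕜 E : Type*} [RCLike 𝕜] [NormedAddCommGroup E] [InnerProductSpace 𝕜 E]

local notation "⟪" x ", " y "⟫" => inner 𝕜 x y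

theorem IsPositive.apply_eq_zero_of_re_inner_eq_zero {T : E →ₗ[𝕜] E} (hT : T.IsPositive)
    {x : E} (hx : RCLike.re ⟪T x, x⟫ = 0) : T x = 0 := by
  have hquad : ∀ t : ℝ, 0 ≤ RCLike.re ⟪T (T x), T x⟫ * (t * t) + (-2 * ‖T x‖ ^ 2) * t + 0 := by
    intro t
    have h := hT.re_inner_nonneg_left (x - (t : 𝕜) • T x)
    have hsym : ⟪T (T x), x⟫ = ⟪T x, T x⟫ := hT.isSymmetric _ _
    simp only [map_sub, map_smul, inner_sub_left, inner_sub_right, inner_smul_left,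
      inner_smul_right, RCLike.conj_ofReal, hsym, RCLike.re_ofReal_mul, hx,
      inner_self_eq_norm_sq_to_K] at h
    rw [← RCLike.ofReal_pow, RCLike.ofReal_re] at h
    linear_combination h
  have hdiscr := discrim_le_zero hquad
  rw [discrim] at hdiscr
  have : ‖T x‖ ^ 2 = 0 := by nlinarith [sq_nonneg (‖T x‖ ^ 2)]
  simpa using this

theorem IsPositive.ker_add_le_ker_left {T S : E →ₗ[𝕜] E} (hT : T.IsPositive)
    (hS : S.IsPositive) : ker (T + S) ≤ ker T := by
  intro x hx
  rw [mem_ker, add_apply] at hx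
  have hsum : RCLike.re ⟪T x, x⟫ + RCLike.re ⟪S x, x⟫ = 0 := by
    rw [← map_add, ← inner_add_left, hx, inner_zero_left, map_zero]
  exact hT.apply_eq_zero_of_re_inner_eq_zero
    (by linarith [hT.re_inner_nonneg_left x, hS.re_inner_nonneg_left x])

theorem IsSymmetric.range_le_range_of_ker_le [FiniteDimensional 𝕜 E] {T S : E →ₗ[𝕜] E}
    (hT : T.IsSymmetric) (hS : S.IsSymmetric) (h : ker S ≤ ker T) : range T ≤ range S := by
  rw [← (range T).orthogonal_orthogonal, ← (range S).orthogonal_orthogonal,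
    hT.orthogonal_range, hS.orthogonal_range]
  exact Submodule.orthogonal_le h

theorem surjective_adjoint_of_injective {F : Type*} [NormedAddCommGroup F]
    [InnerProductSpace 𝕜 F] [FiniteDimensional 𝕜 E] [FiniteDimensional 𝕜 F] {T : E →ₗ[𝕜] F}
    (hT : Function.Injective T) : Function.Surjective (adjoint T) := by
  rw [← range_eq_top, ← orthogonal_ker, ker_eq_bot.mpr hT, Submodule.bot_orthogonal_eq_top]

end InnerProductSpace

section InnerInverse

variable {R M N M' N' : Type*} [Ring R] [AddCommGroup M] [Module R M] [AddCommGroup N]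
  [Module R N] [AddCommGroup M'] [Module R M'] [AddCommGroup N'] [Module R N']

def IsInnerInverse (S : M →ₗ[R] N) (X : N →ₗ[R] M) : Prop :=
  S ∘ₗ (X ∘ₗ S) = S

theorem IsInnerInverse.comp_comp_eq_of_ker_le {S : M →ₗ[R] N} {X : N →ₗ[R] M}
    {A : M →ₗ[R] N'} (hX : IsInnerInverse S X) (h : ker S ≤ ker A) : A ∘ₗ (X ∘ₗ S) = A := by
  ext x
  have hx : S (X (S x) - x) = 0 := by
    rw [map_sub, sub_eq_zero]
    exact congr($hX x)
  simpa [sub_eq_zero] using h hx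

theorem IsInnerInverse.comp_comp_eq_of_range_le {S : M →ₗ[R] N} {X : N →ₗ[R] M}
    {B : M' →ₗ[R] N} (hX : IsInnerInverse S X) (h : range B ≤ range S) :
    S ∘ₗ (X ∘ₗ B) = B := by
  ext x
  obtain ⟨y, hy⟩ := h (mem_range_self B x)
  simpa [← hy] using congr($hX y)

theorem IsInnerInverse.comp_comp_eq {S : M →ₗ[R] N} {X Y : N →ₗ[R] M} {A : M →ₗ[R] N'}
    {B : M' →ₗ[R] N} (hX : IsInnerInverse S X) (hY : IsInnerInverse S Y) (hA : ker S ≤ ker A)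
    (hB : range B ≤ range S) : A ∘ₗ (X ∘ₗ B) = A ∘ₗ (Y ∘ₗ B) :=
  calc A ∘ₗ (X ∘ₗ B) = A ∘ₗ (X ∘ₗ (S ∘ₗ (Y ∘ₗ B))) := by rw [hY.comp_comp_eq_of_range_le hB]
    _ = (A ∘ₗ (X ∘ₗ S)) ∘ₗ (Y ∘ₗ B) := rfl
    _ = A ∘ₗ (Y ∘ₗ B) := by rw [hX.comp_comp_eq_of_ker_le hA]

theorem IsInnerInverse.of_comp_comp {S : M →ₗ[R] N} {P : N →ₗ[R] N'} {Q : M' →ₗ[R] M}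
    {Y : N' →ₗ[R] M'} (hP : Function.Injective P) (hQ : Function.Surjective Q)
    (hY : IsInnerInverse (P ∘ₗ (S ∘ₗ Q)) Y) : IsInnerInverse S (Q ∘ₗ (Y ∘ₗ P)) := by
  rw [IsInnerInverse, ← cancel_left hP, ← cancel_right hQ]
  exact hY

end InnerInverse

end LinearMap

open LinearMap in
theorem parallelSum_congruence {V : Type*} [NormedAddCommGroup V] [InnerProductSpace ℝ V]
    [FiniteDimensional ℝ V] (A B : V →ₗ[ℝ] V)
    (hA : A.IsSymmetric) (hB : B.IsSymmetric)
    (hApsd : ∀ x : V, 0 ≤ (inner ℝ x (A x) : ℝ)) (hBpsd : ∀ x : V, 0 ≤ (inner ℝ x (B x) : ℝ))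
    (G : V →ₗ[ℝ] V) (hG : IsMoorePenrose (A + B) G)
    (M : V →ₗ[ℝ] V) (hM : Function.Bijective M)
    (G' : V →ₗ[ℝ] V)
    (hG' : IsMoorePenrose (M ∘ₗ (A ∘ₗ LinearMap.adjoint M) + M ∘ₗ (B ∘ₗ LinearMap.adjoint M)) G') :
    M ∘ₗ (((2 : ℝ) • (A ∘ₗ (G ∘ₗ B))) ∘ₗ LinearMap.adjoint M) =
      (2 : ℝ) • ((M ∘ₗ (A ∘ₗ LinearMap.adjoint M)) ∘ₗ
        (G' ∘ₗ (M ∘ₗ (B ∘ₗ LinearMap.adjoint M)))) := by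
  have hApos : A.IsPositive := ⟨hA, fun x => by simpa [real_inner_comm] using hApsd x⟩
  have hBpos : B.IsPositive := ⟨hB, fun x => by simpa [real_inner_comm] using hBpsd x⟩
  have hG'S : IsInnerInverse (M ∘ₗ ((A + B) ∘ₗ adjoint M)) G' := by
    simpa only [IsInnerInverse, add_comp, comp_add] using hG'.1
  have key : A ∘ₗ (G ∘ₗ B) = A ∘ₗ ((adjoint M ∘ₗ (G' ∘ₗ M)) ∘ₗ B) :=
    IsInnerInverse.comp_comp_eq hG.1
      (.of_comp_comp hM.1 (surjective_adjoint_of_injective hM.1) hG'S)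
      (hApos.ker_add_le_ker_left hBpos)
      (hB.range_le_range_of_ker_le (hA.add hB) (add_comm B A ▸ hBpos.ker_add_le_ker_left hApos))
  rw [smul_comp, comp_smul, key]
  rfl
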